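/- arXiv:2107.05369 — 3 statements merged into one kernel-verified Lean document; each statement's English description precedes it below -/
import Mathlib

section
/- Let (D, ā) be a pointed database and 1 ≤ ℓ < k. If (D', b̄) is a pointed database of treewidth (ℓ, k) and there is a homomorphism h from D' to D with h(b̄) = ā, then there is a homomorphism g from D' to the (ℓ,k)-unraveling D≈_{ā,ℓ,k} of D up to ā with g(b̄) = ā. -/
set_option autoImplicit false

attribute [local instance] Classical.propDecidable

/-! ### Interpretations, databases, homomorphisms -/

structure Interp (C R A : Type) where
  cn : C → A → Prop
  rn : R → A → A → Prop

namespace Interp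

variable {C R A : Type}

/-- The active domain of an interpretation/database. -/
def adom (I : Interp C R A) : Set A :=
  {a | (∃ c, I.cn c a) ∨ (∃ r b, I.rn r a b) ∨ (∃ r b, I.rn r b a)}

/-- An interpretation has finitely many facts (this is what makes it a database). -/
def FiniteFacts (I : Interp C R A) : Prop :=
  {p : C × A | I.cn p.1 p.2}.Finite ∧ {t : R × A × A | I.rn t.1 t.2.1 t.2.2}.Finite

/-- All facts use only symbols from the signature `(SC, SR)`. -/
def InSig (I : Interp C R A) (SC : Set C) (SR : Set R) : Prop :=
  (∀ c a, I.cn c a → c ∈ SC) ∧ (∀ r a b, I.rn r a b → r ∈ SR)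

/-- Restriction of an interpretation to a set of elements. -/
def restrict (I : Interp C R A) (s : Set A) : Interp C R A where
  cn c a := a ∈ s ∧ I.cn c a
  rn r a b := a ∈ s ∧ b ∈ s ∧ I.rn r a b

/-- Semantics of (possibly inverse) roles: `Sum.inl r` is `r`, `Sum.inr r` is `r⁻`. -/
def roleE (I : Interp C R A) : R ⊕ R → A → A → Prop
  | .inl r, a, b => I.rn r a b
  | .inr r, a, b => I.rn r b a

/-- The undirected graph underlying an interpretation. -/
def graphOf (I : Interp C R A) : SimpleGraph A where
  Adj a b := a ≠ b ∧ ∃ r, I.rn r a b ∨ I.rn r b a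
  symm := ⟨by rintro a b ⟨hne, r, hr⟩; exact ⟨hne.symm, r, hr.symm⟩⟩
  loopless := ⟨by rintro a ⟨hne, -⟩; exact hne rfl⟩

/-- A database/interpretation is a tree: the underlying graph is acyclic,
there are no self loops and no multi-edges (trees need not be connected). -/
def IsTree (I : Interp C R A) : Prop :=
  I.graphOf.IsAcyclic ∧ (∀ r a, ¬ I.rn r a a) ∧
    (∀ (ρ₁ ρ₂ : R ⊕ R) (a b : A), ρ₁ ≠ ρ₂ → I.roleE ρ₁ a b → ¬ I.roleE ρ₂ a b)

end Interp

/-- Homomorphisms between interpretations. -/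
structure Hom {C R A B : Type} (I : Interp C R A) (J : Interp C R B) where
  toFun : A → B
  map_cn : ∀ c a, I.cn c a → J.cn c (toFun a)
  map_rn : ∀ r a b, I.rn r a b → J.rn r (toFun a) (toFun b)

/-! ### Tree decompositions and treewidth -/

/-- An `(ℓ,k)`-tree decomposition of an interpretation: an undirected tree `(V,G)`
with bags of size at most `k`, pairwise overlaps of size at most `ℓ`, every active
element appearing in a nonempty connected set of bags, and every role edge
contained in some bag. -/
structure TreeDecomp {C R A : Type} (I : Interp C R A) (ℓ k : ℕ) where
  V : Type
  G : SimpleGraph V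
  conn : G.Connected
  acyc : G.IsAcyclic
  bag : V → Set A
  cover : ∀ a ∈ I.adom, (G.induce {v | a ∈ bag v}).Connected
  edges : ∀ r a b, I.rn r a b → ∃ v, a ∈ bag v ∧ b ∈ bag v
  bagFin : ∀ v, (bag v).Finite
  bagCard : ∀ v, (bag v).ncard ≤ k
  overlap : ∀ v w, v ≠ w → (bag v ∩ bag w).ncard ≤ ℓ

/-- `I` has treewidth `(ℓ,k)`. -/
def HasTW {C R A : Type} (I : Interp C R A) (ℓ k : ℕ) : Prop :=
  Nonempty (TreeDecomp I ℓ k)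

/-! ### Conjunctive queries and UCQs -/

/-- A conjunctive query with `m` answer variables (`Fin m`) and quantified
variables `V`. -/
structure CQ (C R : Type) (m : ℕ) where
  V : Type
  cnAtoms : Set (C × (Fin m ⊕ V))
  rnAtoms : Set (R × (Fin m ⊕ V) × (Fin m ⊕ V))

namespace CQ

variable {C R A : Type} {m : ℕ}

/-- `I ⊨ q(atup)`. -/
def Eval (q : CQ C R m) (I : Interp C R A) (atup : Fin m → A) : Prop :=
  ∃ h : Fin m ⊕ q.V → A, (∀ i, h (.inl i) = atup i) ∧
    (∀ p ∈ q.cnAtoms, I.cn p.1 (h p.2)) ∧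
    (∀ t ∈ q.rnAtoms, I.rn t.1 (h t.2.1) (h t.2.2))

/-- The canonical database of a CQ (all variables as constants). -/
def canon (q : CQ C R m) : Interp C R (Fin m ⊕ q.V) where
  cn c x := (c, x) ∈ q.cnAtoms
  rn r x y := (r, x, y) ∈ q.rnAtoms

/-- The treewidth of a CQ: the treewidth of its canonical database restricted to
the quantified variables (answer variables do not contribute). -/
def HasTWq (q : CQ C R m) (ℓ k : ℕ) : Prop :=
  HasTW (q.canon.restrict (Set.range Sum.inr)) ℓ k

end CQ

/-- A union of conjunctive queries, as an indexed family of CQs of the same arity. -/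
structure UCQ (C R : Type) (m : ℕ) where
  ι : Type
  d : ι → CQ C R m

def UCQ.Eval {C R A : Type} {m : ℕ} (q : UCQ C R m) (I : Interp C R A)
    (atup : Fin m → A) : Prop :=
  ∃ i, (q.d i).Eval I atup

/-! ### Certain answers (generic in the ontology semantics) -/

/-- `atup` is a certain answer on `D` for query semantics `Ev`, w.r.t. all
(nonempty) models satisfying `Mod`: under the standard-names-free reading,
models of `D` are interpretations together with a homomorphism from `D`. -/
def Certain {C R A : Type} {m : ℕ} (Mod : ∀ Δ : Type, Interp C R Δ → Prop)
    (D : Interp C R A) (Ev : ∀ Δ : Type, Interp C R Δ → (Fin m → Δ) → Prop)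
    (atup : Fin m → A) : Prop :=
  ∀ (Δ : Type), Nonempty Δ → ∀ I : Interp C R Δ, Mod Δ I →
    ∀ h : Hom D I, Ev Δ I (fun i => h.toFun (atup i))

/-- `D` is satisfiable w.r.t. the class of models described by `Mod`. -/
def Satisfiable {C R A : Type} (Mod : ∀ Δ : Type, Interp C R Δ → Prop)
    (D : Interp C R A) : Prop :=
  ∃ (Δ : Type) (_ : Nonempty Δ) (I : Interp C R Δ), Nonempty (Hom D I) ∧ Mod Δ I

/-! ### First-order logic (no equality, no constants) -/

inductive FO (C R : Type) : ℕ → Type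
  | cn {n : ℕ} (c : C) (i : Fin n) : FO C R n
  | rn {n : ℕ} (r : R) (i j : Fin n) : FO C R n
  | fls {n : ℕ} : FO C R n
  | imp {n : ℕ} (φ ψ : FO C R n) : FO C R n
  | all {n : ℕ} (φ : FO C R (n+1)) : FO C R n

def FO.Eval {C R A : Type} (I : Interp C R A) : {n : ℕ} → FO C R n → (Fin n → A) → Prop
  | _, .cn c i, v => I.cn c (v i)
  | _, .rn r i j, v => I.rn r (v i) (v j)
  | _, .fls, _ => False
  | _, .imp φ ψ, v => φ.Eval I v → ψ.Eval I v
  | _, .all φ, v => ∀ a, φ.Eval I (Fin.cons a v)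

/-- `I` is a model of the FO ontology `O`. -/
def ModelsFO {C R A : Type} (I : Interp C R A) (O : Set (FO C R 0)) : Prop :=
  ∀ φ ∈ O, φ.Eval I (fun i => i.elim0)

/-- `O ⊨ O'` for FO ontologies. -/
def FOEntails {C R : Type} (O O' : Set (FO C R 0)) : Prop :=
  ∀ (Δ : Type), Nonempty Δ → ∀ I : Interp C R Δ, ModelsFO I O → ModelsFO I O'

/-! ### Tuple-generating dependencies -/

/-- A TGD with `n` frontier variables, whose body and head are CQs with the
frontier variables as answer variables; `head = none` stands for `⊥`. -/
structure TGD (C R : Type) where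
  n : ℕ
  body : CQ C R n
  head : Option (CQ C R n)

def TGD.Sat {C R A : Type} (t : TGD C R) (I : Interp C R A) : Prop :=
  ∀ v : Fin t.n → A, t.body.Eval I v →
    match t.head with
    | some ψ => ψ.Eval I v
    | none => False

def ModelsTGDSet {C R A : Type} (I : Interp C R A) (O : Set (TGD C R)) : Prop :=
  ∀ t ∈ O, t.Sat I

/-! ### Description logic concepts -/

/-- `ELIU` concepts with ⊥, possibly disjunction and the universal role. -/
inductive ELIU (C R : Type) : Type
  | top
  | bot
  | cn (c : C)
  | inter (X Y : ELIU C R)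
  | union (X Y : ELIU C R)
  | exR (ρ : R ⊕ R) (X : ELIU C R)
  | exU (X : ELIU C R)

namespace ELIU

variable {C R A : Type}

def sem (I : Interp C R A) : ELIU C R → A → Prop
  | .top, _ => True
  | .bot, _ => False
  | .cn c, a => I.cn c a
  | .inter X Y, a => X.sem I a ∧ Y.sem I a
  | .union X Y, a => X.sem I a ∨ Y.sem I a
  | .exR ρ X, a => ∃ b, I.roleE ρ a b ∧ X.sem I b
  | .exU X, _ => ∃ b, X.sem I b

def uFree : ELIU C R → Prop
  | .top => True
  | .bot => True
  | .cn _ => True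
  | .inter X Y => X.uFree ∧ Y.uFree
  | .union X Y => X.uFree ∧ Y.uFree
  | .exR _ X => X.uFree
  | .exU _ => False

def disjFree : ELIU C R → Prop
  | .top => True
  | .bot => True
  | .cn _ => True
  | .inter X Y => X.disjFree ∧ Y.disjFree
  | .union _ _ => False
  | .exR _ X => X.disjFree
  | .exU X => X.disjFree

def botFree : ELIU C R → Prop
  | .top => True
  | .bot => False
  | .cn _ => True
  | .inter X Y => X.botFree ∧ Y.botFree
  | .union X Y => X.botFree ∧ Y.botFree
  | .exR _ X => X.botFree
  | .exU X => X.botFree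

end ELIU

/-- A concept inclusion is an `ELI_⊥` CI (no disjunction, no universal role). -/
def ELIbotCI {C R : Type} (p : ELIU C R × ELIU C R) : Prop :=
  p.1.disjFree ∧ p.1.uFree ∧ p.2.disjFree ∧ p.2.uFree

/-- A concept inclusion is an `ELI` CI. -/
def ELICI {C R : Type} (p : ELIU C R × ELIU C R) : Prop :=
  ELIbotCI p ∧ p.1.botFree ∧ p.2.botFree

def ModelsELIUOnt {C R A : Type} (I : Interp C R A)
    (T : Set (ELIU C R × ELIU C R)) : Prop :=
  ∀ p ∈ T, ∀ a, p.1.sem I a → p.2.sem I a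

def EntailsELIU {C R : Type} (T T' : Set (ELIU C R × ELIU C R)) : Prop :=
  ∀ (Δ : Type), Nonempty Δ → ∀ I : Interp C R Δ, ModelsELIUOnt I T → ModelsELIUOnt I T'

/-- `ALCI` concepts. -/
inductive ALCI (C R : Type) : Type
  | top
  | cn (c : C)
  | neg (X : ALCI C R)
  | inter (X Y : ALCI C R)
  | exR (ρ : R ⊕ R) (X : ALCI C R)

namespace ALCI

variable {C R A : Type}

def sem (I : Interp C R A) : ALCI C R → A → Prop
  | .top, _ => True
  | .cn c, a => I.cn c a
  | .neg X, a => ¬ X.sem I a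
  | .inter X Y, a => X.sem I a ∧ Y.sem I a
  | .exR ρ X, a => ∃ b, I.roleE ρ a b ∧ X.sem I b

/-- `C ⊔ D` as an abbreviation. -/
def unionA (X Y : ALCI C R) : ALCI C R := .neg (.inter (.neg X) (.neg Y))

/-- `∀r.C` as an abbreviation. -/
def allR (r : R) (X : ALCI C R) : ALCI C R := .neg (.exR (.inl r) (.neg X))

/-- `∃rⁿ.C` (n-fold nesting). -/
def exPow (r : R) : ℕ → ALCI C R → ALCI C R
  | 0, X => X
  | n+1, X => .exR (.inl r) (exPow r n X)

end ALCI

def ModelsALCIOnt {C R A : Type} (I : Interp C R A)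
    (O : Set (ALCI C R × ALCI C R)) : Prop :=
  ∀ p ∈ O, ∀ a, p.1.sem I a → p.2.sem I a

def EntailsALCI {C R : Type} (O O' : Set (ALCI C R × ALCI C R)) : Prop :=
  ∀ (Δ : Type), Nonempty Δ → ∀ I : Interp C R Δ, ModelsALCIOnt I O → ModelsALCIOnt I O'

/-- The set `O≈` of all `ELI^u_⊥` concept inclusions entailed by the ALCI
ontology `O`. -/
def ELIuApprox {C R : Type} (O : Set (ALCI C R × ALCI C R)) :
    Set (ELIU C R × ELIU C R) :=
  {p | p.1.disjFree ∧ p.2.disjFree ∧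
    ∀ (Δ : Type), Nonempty Δ → ∀ I : Interp C R Δ, ModelsALCIOnt I O →
      ∀ a, p.1.sem I a → p.2.sem I a}

/-! ### bELIQs -/

/-- A bELIQ: either an ELIQ `C(x)` (unary) or a Boolean ELIQ `∃u.C`. -/
inductive BELIQ (C R : Type) : Type
  | q1 (X : ELIU C R)
  | q0 (X : ELIU C R)

namespace BELIQ

variable {C R A : Type}

def arity : BELIQ C R → ℕ
  | .q1 _ => 1
  | .q0 _ => 0

/-- Well-formedness: the underlying concept is an `ELI` concept. -/
def wf : BELIQ C R → Prop
  | .q1 X => X.disjFree ∧ X.uFree ∧ X.botFree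
  | .q0 X => X.disjFree ∧ X.uFree ∧ X.botFree

def Eval : (q : BELIQ C R) → Interp C R A → (Fin q.arity → A) → Prop
  | .q1 X, I, v => X.sem I (v ⟨0, Nat.zero_lt_one⟩)
  | .q0 X, I, _ => ∃ a, X.sem I a

end BELIQ

/-! ### Tree unraveling -/

/-- Paths in a database, indexed by their tail. -/
inductive UPath {C R A : Type} (I : Interp C R A) : A → Type
  | nil (a : A) : UPath I a
  | cons {a : A} (p : UPath I a) (ρ : R ⊕ R) (b : A) (h : I.roleE ρ a b) : UPath I b

/-- The tree unraveling `D≈_S` of `D` at `S`: it contains all facts of `D|_S`,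
the facts along paths, and the connecting facts between `S` and paths. -/
def treeUnravel {C R A : Type} (D : Interp C R A) (S : Set A) :
    Interp C R (A ⊕ (Σ a : A, UPath D a)) where
  cn c x :=
    match x with
    | .inl a => a ∈ S ∧ D.cn c a
    | .inr p => D.cn c p.1
  rn r x y :=
    (∃ a b, a ∈ S ∧ b ∈ S ∧ D.rn r a b ∧ x = .inl a ∧ y = .inl b) ∨
    (∃ (a : A) (p : UPath D a) (b : A) (h : D.roleE (.inl r) a b),
        x = .inr ⟨a, p⟩ ∧ y = .inr ⟨b, p.cons (.inl r) b h⟩) ∨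
    (∃ (a : A) (p : UPath D a) (b : A) (h : D.roleE (.inr r) a b),
        y = .inr ⟨a, p⟩ ∧ x = .inr ⟨b, p.cons (.inr r) b h⟩) ∨
    (∃ (a b : A) (p : UPath D b), a ∈ S ∧ D.rn r a b ∧ x = .inl a ∧ y = .inr ⟨b, p⟩) ∨
    (∃ (a b : A) (p : UPath D b), a ∈ S ∧ D.rn r b a ∧ x = .inr ⟨b, p⟩ ∧ y = .inl a)

/-! ### (ℓ,k)-unraveling -/

/-- Admissibility of a bag `T` in an `(ℓ,k)`-sequence: `S ⊆ T ⊆ adom(D)` and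
`|T \ S| ≤ k`. -/
def SeqOk {C R A : Type} (D : Interp C R A) (S : Set A) (k : ℕ) (T : Set A) : Prop :=
  S ⊆ T ∧ T ⊆ D.adom ∧ (T \ S).Finite ∧ (T \ S).ncard ≤ k

/-- `(ℓ,k)`-sequences `S₀,O₀,S₁,…,Sₙ`, indexed by the last bag `Sₙ`. -/
inductive LKSeq {C R A : Type} (D : Interp C R A) (S : Set A) (ℓ k : ℕ) : Set A → Type
  | first (S₀ : Set A) (h : SeqOk D S k S₀) : LKSeq D S ℓ k S₀
  | step {T : Set A} (v : LKSeq D S ℓ k T) (O T' : Set A)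
      (hO : S ⊆ O) (hOT : O ⊆ T ∩ T') (hOf : (O \ S).Finite)
      (hOl : (O \ S).ncard ≤ ℓ) (hT' : SeqOk D S k T') : LKSeq D S ℓ k T'

/-- Elements of the `(ℓ,k)`-unraveling: elements of `S` keep their names
(`Sum.inl`), all other copies are identified by the sequence at which they are
introduced. -/
abbrev LKElem {C R A : Type} (D : Interp C R A) (S : Set A) (ℓ k : ℕ) : Type :=
  A ⊕ (Σ T : Set A, LKSeq D S ℓ k T × A)

/-- The copy `a_v` of `a` in the bag of the sequence `v`. -/
noncomputable def LKSeq.rep {C R A : Type} {D : Interp C R A} {S : Set A} {ℓ k : ℕ} :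
    {T : Set A} → LKSeq D S ℓ k T → A → LKElem D S ℓ k
  | _, .first S₀ h, a =>
      if a ∈ S then Sum.inl a else Sum.inr ⟨S₀, (LKSeq.first S₀ h, a)⟩
  | _, .step v O T' h1 h2 h3 h4 h5, a =>
      if a ∈ S then Sum.inl a
      else if a ∈ O then v.rep a
      else Sum.inr ⟨T', (LKSeq.step v O T' h1 h2 h3 h4 h5, a)⟩

/-- The `(ℓ,k)`-unraveling `D≈_{S,ℓ,k}` of `D` up to `S`. -/
noncomputable def unravelLK {C R A : Type} (D : Interp C R A) (S : Set A) (ℓ k : ℕ) :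
    Interp C R (LKElem D S ℓ k) where
  cn c x := ∃ (T : Set A) (v : LKSeq D S ℓ k T) (a : A),
      a ∈ T ∧ x = v.rep a ∧ D.cn c a
  rn r x y := ∃ (T : Set A) (v : LKSeq D S ℓ k T) (a b : A),
      a ∈ T ∧ b ∈ T ∧ x = v.rep a ∧ y = v.rep b ∧ D.rn r a b

/-- The uncopying map. -/
def uncopyLK {C R A : Type} {D : Interp C R A} {S : Set A} {ℓ k : ℕ} :
    LKElem D S ℓ k → A
  | .inl a => a
  | .inr x => x.2.2

/-- `x` is a copy of `a` in the `(ℓ,k)`-unraveling. -/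
def IsCopyLK {C R A : Type} {D : Interp C R A} {S : Set A} {ℓ k : ℕ}
    (x : LKElem D S ℓ k) (a : A) : Prop :=
  ∃ (T : Set A) (v : LKSeq D S ℓ k T), a ∈ T ∧ x = v.rep a

/-- The frontier-one `ℓ,k,ℓ',k'`-TGDs entailed by the ALCI ontology `O`. -/
def approxTGDs {C R : Type} (O : Set (ALCI C R × ALCI C R)) (ℓ k ℓ' k' : ℕ) :
    Set (TGD C R) :=
  {t | t.n ≤ 1 ∧ HasTW t.body.canon ℓ k ∧
       (∀ ψ, t.head = some ψ → HasTW ψ.canon ℓ' k') ∧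
       ∀ (Δ : Type), Nonempty Δ → ∀ I : Interp C R Δ, ModelsALCIOnt I O → t.Sat I}

/-! ### The disjunct operation f and the approximation set E_O -/

def fDisj {C R : Type} : ELIU C R → Set (ELIU C R)
  | .top => {ELIU.top}
  | .bot => {ELIU.bot}
  | .cn c => {ELIU.cn c}
  | .inter X Y => {Z | ∃ X' ∈ fDisj X, ∃ Y' ∈ fDisj Y, Z = ELIU.inter X' Y'}
  | .union X Y => fDisj X ∪ fDisj Y
  | .exR ρ X => {Z | ∃ X' ∈ fDisj X, Z = ELIU.exR ρ X'}
  | .exU X => {Z | ∃ X' ∈ fDisj X, Z = ELIU.exU X'}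

/-- The rewriting of `O` replacing each `C ⊑ D` by `{C' ⊑ D : C' ∈ f(C)}`. -/
def rewriteO {C R : Type} (O : Set (ELIU C R × ELIU C R)) :
    Set (ELIU C R × ELIU C R) :=
  {p | ∃ q ∈ O, p.2 = q.2 ∧ p.1 ∈ fDisj q.1}

/-- `E_O`: all ontologies obtained by choosing, for each inclusion `C' ⊑ D` of
the rewriting, one inclusion `C' ⊑ D'` with `D' ∈ f(D)`. -/
def EO {C R : Type} (O : Set (ELIU C R × ELIU C R)) :
    Set (Set (ELIU C R × ELIU C R)) :=
  {Oh | ∃ g : ELIU C R × ELIU C R → ELIU C R,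
      (∀ p ∈ rewriteO O, g p ∈ fDisj p.2) ∧
      Oh = {q | ∃ p ∈ rewriteO O, q = (p.1, g p)}}

/-! ### Direct products -/

def prodInterp {C R : Type} {n : ℕ} {A : Fin n → Type}
    (I : ∀ i, Interp C R (A i)) : Interp C R (∀ i, A i) where
  cn c f := ∀ i, (I i).cn c (f i)
  rn r f g := ∀ i, (I i).rn r (f i) (g i)

/-! ### Concrete databases and queries for specific statements -/

/-- The grid CQ `q_m` of Statement 16, as its canonical database. -/
def gridDB {C R : Type} (m : ℕ) (r : R) (Aname : Fin m × Fin m → C) :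
    Interp C R (Fin m × Fin m) where
  cn c p := c = Aname p
  rn ρ p q := ρ = r ∧ Even (p.1.1 + p.2.1) ∧
    ((p.1.1 : ℤ) - (q.1.1 : ℤ)).natAbs + ((p.2.1 : ℤ) - (q.2.1 : ℤ)).natAbs = 1

/-- The 3-cycle database of Statement 19. -/
def cycleDB {C R : Type} (nA : Fin 3 → C) (r : R) : Interp C R (Fin 3) where
  cn c i := c = nA i
  rn ρ i j := ρ = r ∧ j = i + 1

/-- The ontology `{Aᵢ ⊓ Aⱼ ⊑ B : 1 ≤ i < j ≤ 3}` of Statement 19. -/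
def cycleOnt {C R : Type} (nA : Fin 3 → C) (nB : C) : Set (ELIU C R × ELIU C R) :=
  {p | ∃ i j : Fin 3, i < j ∧
    p = (ELIU.inter (ELIU.cn (nA i)) (ELIU.cn (nA j)), ELIU.cn nB)}

/-- The Boolean CQ `∃x B(x)` of Statement 19. -/
def existsB {C R : Type} (nB : C) : CQ C R 0 where
  V := Unit
  cnAtoms := {(nB, Sum.inr ())}
  rnAtoms := ∅

/-- The ontology `O = {∃r.⊤ ⊓ ∀r.A ⊑ B₁ ⊔ B₂}` of Statement 14. -/
def O14 {C R : Type} (a b1 b2 : C) (r : R) : Set (ALCI C R × ALCI C R) :=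
  {(ALCI.inter (ALCI.exR (.inl r) ALCI.top) (ALCI.allR r (ALCI.cn a)),
    ALCI.unionA (ALCI.cn b1) (ALCI.cn b2))}

/-- The ontology `O_n` of Statement 14. -/
def O14n {C R : Type} (a b1 x : C) (r : R) (n : ℕ) : Set (ALCI C R × ALCI C R) :=
  {(ALCI.exR (.inl r) (ALCI.cn a), ALCI.exPow r n (ALCI.cn x)),
   (ALCI.exR (.inl r) (ALCI.inter (ALCI.cn a) (ALCI.exPow r (n-1) (ALCI.cn x))),
    ALCI.cn b1)}

/-!
Root the tree decomposition of `D'` without `b̄` at some node. Together with `ā`, the `h`-images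
of its bags are admissible bags and the `h`-images of the overlaps of adjacent bags admissible
overlaps, so the path from the root to any node spells an `(ℓ,k)`-sequence. Send `x` to the copy
of `h x` in the sequence of a node whose bag contains `x`. This does not depend on the node: the
nodes containing `x` form a subtree, and along each of its edges the copy of `h x` is inherited.
Every fact of `D'` is then preserved: its images lie in a single bag, since `ā` lies in all of
them.
-/

open SimpleGraph

theorem Interp.adom_restrict_subset {C R A : Type} (I : Interp C R A) (s : Set A) :
    (I.restrict s).adom ⊆ I.adom := by
  rintro x (⟨c, hc⟩ | ⟨r, y, hr⟩ | ⟨r, y, hr⟩)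
  · exact Or.inl ⟨c, hc.2⟩
  · exact Or.inr (Or.inl ⟨r, y, hr.2.2⟩)
  · exact Or.inr (Or.inr ⟨r, y, hr.2.2⟩)

theorem Hom.map_adom {C R A B : Type} {I : Interp C R A} {J : Interp C R B} (h : Hom I J)
    {x : A} (hx : x ∈ I.adom) : h.toFun x ∈ J.adom := by
  rcases hx with ⟨c, hc⟩ | ⟨r, y, hr⟩ | ⟨r, y, hr⟩
  · exact Or.inl ⟨c, h.map_cn c x hc⟩
  · exact Or.inr (Or.inl ⟨r, h.toFun y, h.map_rn r x y hr⟩)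
  · exact Or.inr (Or.inr ⟨r, h.toFun y, h.map_rn r y x hr⟩)

theorem SimpleGraph.Reachable.eq_of_forall_adj {V α : Type*} {G : SimpleGraph V} {f : V → α}
    (hf : ∀ ⦃u v⦄, G.Adj u v → f u = f v) {u v : V} (huv : G.Reachable u v) : f u = f v := by
  obtain ⟨p⟩ := huv
  induction p with
  | nil => rfl
  | cons h _ ih => exact (hf h).trans ih

theorem SimpleGraph.IsAcyclic.path_eq_cons_or {V : Type*} {G : SimpleGraph V} (hG : G.IsAcyclic)
    {v₀ : V} (P : ∀ v, G.Path v v₀) {u v : V} (h : G.Adj u v) :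
    (P u : G.Walk u v₀) = .cons h (P v) ∨ (P v : G.Walk v v₀) = .cons h.symm (P u) := by
  by_cases hv : v ∈ (P u : G.Walk u v₀).support
  · left
    have htake : (P u : G.Walk u v₀).takeUntil v hv = .cons h .nil :=
      congrArg Subtype.val <| (hG.subsingleton_path u v).elim ⟨_, (P u).2.takeUntil hv⟩
        ⟨_, Walk.IsPath.nil.cons (by simp [h.ne])⟩
    have hdrop : (P u : G.Walk u v₀).dropUntil v hv = P v :=
      congrArg Subtype.val <| (hG.subsingleton_path v v₀).elim ⟨_, (P u).2.dropUntil hv⟩ (P v)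
    rw [← Walk.take_spec (P u : G.Walk u v₀) hv, htake, hdrop, Walk.cons_append, Walk.nil_append]
  · exact .inr <| congrArg Subtype.val <|
      (hG.subsingleton_path v v₀).elim (P v) ⟨_, (P u).2.cons hv⟩

section UnionImage

variable {A B : Type} {S : Set A} {f : B → A} {s : Set B}

theorem Set.finite_union_image_diff_left (hs : s.Finite) : ((S ∪ f '' s) \ S).Finite :=
  (hs.image f).subset (Set.union_sdiff_left.trans_subset Set.sdiff_subset)

theorem Set.ncard_union_image_diff_left_le (hs : s.Finite) :
    ((S ∪ f '' s) \ S).ncard ≤ s.ncard :=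
  (Set.ncard_le_ncard (Set.union_sdiff_left.trans_subset Set.sdiff_subset) (hs.image f)).trans
    (Set.ncard_image_le hs)

theorem seqOk_union_image {C R : Type} {D : Interp C R A} {k : ℕ} (hS : S ⊆ D.adom)
    (hf : ∀ x ∈ s, f x ∈ D.adom) (hs : s.Finite) (hk : s.ncard ≤ k) :
    SeqOk D S k (S ∪ f '' s) :=
  ⟨Set.subset_union_left, Set.union_subset hS (Set.image_subset_iff.2 hf),
    Set.finite_union_image_diff_left hs, (Set.ncard_union_image_diff_left_le hs).trans hk⟩

end UnionImage

section Unraveling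

variable {C R A B V : Type} {D : Interp C R A} {S : Set A} {ℓ k : ℕ}

theorem LKSeq.subset_bag {T : Set A} : LKSeq D S ℓ k T → S ⊆ T
  | .first _ h => h.1
  | .step _ _ _ _ _ _ _ h => h.1

theorem LKSeq.rep_of_mem {T : Set A} (v : LKSeq D S ℓ k T) {a : A} (ha : a ∈ S) :
    v.rep a = .inl a := by
  cases v <;> simp [LKSeq.rep, ha]

theorem Hom.exists_lift_unravelLK {D' : Interp C R B} (h : Hom D' D)
    (σ : B → Σ T : Set A, LKSeq D S ℓ k T)
    (hmem : ∀ x ∈ D'.adom, h.toFun x ∈ (σ x).1)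
    (hrn : ∀ r x y, D'.rn r x y → h.toFun x ∉ S → h.toFun y ∉ S →
      ∃ (T : Set A) (v : LKSeq D S ℓ k T), h.toFun x ∈ T ∧ h.toFun y ∈ T ∧
        (σ x).2.rep (h.toFun x) = v.rep (h.toFun x) ∧
        (σ y).2.rep (h.toFun y) = v.rep (h.toFun y)) :
    ∃ g : Hom D' (unravelLK D S ℓ k), ∀ x, h.toFun x ∈ S → g.toFun x = .inl (h.toFun x) := by
  refine ⟨⟨fun x => (σ x).2.rep (h.toFun x), fun c x hc => ?_, fun r x y hr => ?_⟩,
    fun x hx => LKSeq.rep_of_mem _ hx⟩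
  · exact ⟨_, (σ x).2, _, hmem x (.inl ⟨c, hc⟩), rfl, h.map_cn c x hc⟩
  have hx : x ∈ D'.adom := .inr (.inl ⟨r, y, hr⟩)
  have hy : y ∈ D'.adom := .inr (.inr ⟨r, x, hr⟩)
  by_cases hxS : h.toFun x ∈ S
  · refine ⟨_, (σ y).2, _, _, (σ y).2.subset_bag hxS, hmem y hy, ?_, rfl, h.map_rn r x y hr⟩
    simp only [LKSeq.rep_of_mem _ hxS]
  by_cases hyS : h.toFun y ∈ S
  · refine ⟨_, (σ x).2, _, _, hmem x hx, (σ x).2.subset_bag hyS, rfl, ?_, h.map_rn r x y hr⟩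
    simp only [LKSeq.rep_of_mem _ hyS]
  obtain ⟨T, v, hxT, hyT, ex, ey⟩ := hrn r x y hr hxS hyS
  exact ⟨T, v, _, _, hxT, hyT, ex, ey, h.map_rn r x y hr⟩

/-- Admissible bags on the vertices of a graph and admissible overlaps on its edges, so that
every walk to a root, read backwards, is an `(ℓ,k)`-sequence. -/
structure LKBags (D : Interp C R A) (S : Set A) (ℓ k : ℕ) (G : SimpleGraph V) where
  bag : V → Set A
  overlap : V → V → Set A
  bag_ok : ∀ v, SeqOk D S k (bag v)
  subset_overlap : ∀ ⦃u v⦄, G.Adj u v → S ⊆ overlap u v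
  overlap_subset : ∀ ⦃u v⦄, G.Adj u v → overlap u v ⊆ bag u ∩ bag v
  overlap_finite : ∀ ⦃u v⦄, G.Adj u v → (overlap u v \ S).Finite
  overlap_ncard : ∀ ⦃u v⦄, G.Adj u v → (overlap u v \ S).ncard ≤ ℓ

namespace LKBags

variable {G : SimpleGraph V} (β : LKBags D S ℓ k G) {v₀ : V}

noncomputable def seqOfWalk : {v : V} → G.Walk v v₀ → LKSeq D S ℓ k (β.bag v)
  | _, .nil => .first _ (β.bag_ok v₀)
  | _, .cons h w =>
      .step (seqOfWalk w) _ _ (β.subset_overlap h.symm) (β.overlap_subset h.symm)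
        (β.overlap_finite h.symm) (β.overlap_ncard h.symm) (β.bag_ok _)

theorem rep_seqOfWalk_cons {u v : V} (h : G.Adj v u) (w : G.Walk u v₀) {a : A}
    (ha : a ∈ β.overlap u v) : (β.seqOfWalk (.cons h w)).rep a = (β.seqOfWalk w).rep a := by
  by_cases hS : a ∈ S
  · rw [LKSeq.rep_of_mem _ hS, LKSeq.rep_of_mem _ hS]
  · simp only [seqOfWalk, LKSeq.rep, if_neg hS, if_pos ha]

theorem rep_seqOfWalk_path_eq_of_adj (hG : G.IsAcyclic) (P : ∀ v, G.Path v v₀) {u v : V}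
    (h : G.Adj u v) {a : A} (huv : a ∈ β.overlap u v) (hvu : a ∈ β.overlap v u) :
    (β.seqOfWalk (P u : G.Walk u v₀)).rep a = (β.seqOfWalk (P v : G.Walk v v₀)).rep a := by
  rcases hG.path_eq_cons_or P h with e | e
  · rw [e, β.rep_seqOfWalk_cons _ _ hvu]
  · rw [e, β.rep_seqOfWalk_cons _ _ huv]

end LKBags

namespace TreeDecomp

variable {I : Interp C R B} (td : TreeDecomp I ℓ k) (f : B → A) {U : Set B}
  (hf : ∀ x ∈ U, f x ∈ D.adom) (hS : S ⊆ D.adom)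

noncomputable def lkBags : LKBags D S ℓ k td.G where
  bag v := S ∪ f '' (td.bag v ∩ U)
  overlap u v := S ∪ f '' (td.bag u ∩ td.bag v ∩ U)
  bag_ok v := seqOk_union_image hS (fun x hx => hf x hx.2)
    ((td.bagFin v).subset Set.inter_subset_left)
    ((Set.ncard_le_ncard Set.inter_subset_left (td.bagFin v)).trans (td.bagCard v))
  subset_overlap _ _ _ := Set.subset_union_left
  overlap_subset _ _ _ := Set.subset_inter
    (Set.union_subset_union_right _ (Set.image_mono (by gcongr; exact Set.inter_subset_left)))
    (Set.union_subset_union_right _ (Set.image_mono (by gcongr; exact Set.inter_subset_right)))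
  overlap_finite u _ _ := Set.finite_union_image_diff_left
    ((td.bagFin u).subset (Set.inter_subset_left.trans Set.inter_subset_left))
  overlap_ncard u v h := (Set.ncard_union_image_diff_left_le
    ((td.bagFin u).subset (Set.inter_subset_left.trans Set.inter_subset_left))).trans
    ((Set.ncard_le_ncard Set.inter_subset_left
      ((td.bagFin u).subset Set.inter_subset_left)).trans (td.overlap u v h.ne))

noncomputable def rootPath (v : td.V) : td.G.Path v td.conn.nonempty.some :=
  (td.conn.preconnected v _).some.toPath

noncomputable def lkSeq (v : td.V) : LKSeq D S ℓ k (S ∪ f '' (td.bag v ∩ U)) :=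
  (td.lkBags f hf hS).seqOfWalk (td.rootPath v).1

theorem rep_lkSeq_eq {x : B} (hx : x ∈ I.adom) (hxU : x ∈ U) {u w : td.V} (hu : x ∈ td.bag u)
    (hw : x ∈ td.bag w) : (td.lkSeq f hf hS u).rep (f x) = (td.lkSeq f hf hS w).rep (f x) := by
  have hmem : ∀ u v : td.V, x ∈ td.bag u → x ∈ td.bag v →
      f x ∈ (td.lkBags f hf hS).overlap u v := fun u v hu hv => .inr ⟨x, ⟨⟨hu, hv⟩, hxU⟩, rfl⟩
  refine Reachable.eq_of_forall_adj (f := fun v : {v // x ∈ td.bag v} =>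
      (td.lkSeq f hf hS v).rep (f x)) (fun u v h => ?_) (td.cover x hx ⟨u, hu⟩ ⟨w, hw⟩)
  exact (td.lkBags f hf hS).rep_seqOfWalk_path_eq_of_adj td.acyc td.rootPath h
    (hmem u v u.2 v.2) (hmem v u v.2 u.2)

variable (hk : 1 ≤ k)

/-- Elements outside the active domain of `I` lie in no bag; they get a one-bag sequence. -/
noncomputable def lkSeqOf (x : B) : Σ T : Set A, LKSeq D S ℓ k T :=
  if hx : x ∈ I.adom then ⟨_, td.lkSeq f hf hS ((td.cover x hx).nonempty.some)⟩
  else ⟨_, .first (S ∪ f '' ({x} ∩ U)) (seqOk_union_image hS (fun y hy => hf y hy.2)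
    ((Set.finite_singleton x).subset Set.inter_subset_left)
    ((Set.ncard_le_ncard Set.inter_subset_left (Set.finite_singleton x)).trans
      ((Set.ncard_singleton x).trans_le hk)))⟩

theorem mem_lkSeqOf {x : B} (hx : x ∈ U) : f x ∈ (td.lkSeqOf f hf hS hk x).1 := by
  unfold lkSeqOf
  split_ifs with hxI
  · exact .inr ⟨x, ⟨((td.cover x hxI).nonempty.some).2, hx⟩, rfl⟩
  · exact .inr ⟨x, ⟨rfl, hx⟩, rfl⟩

theorem exists_lkSeq_of_rn (hIU : I.adom ⊆ U) {r : R} {x y : B} (hr : I.rn r x y) :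
    ∃ (T : Set A) (v : LKSeq D S ℓ k T), f x ∈ T ∧ f y ∈ T ∧
      (td.lkSeqOf f hf hS hk x).2.rep (f x) = v.rep (f x) ∧
      (td.lkSeqOf f hf hS hk y).2.rep (f y) = v.rep (f y) := by
  have hx : x ∈ I.adom := .inr (.inl ⟨r, y, hr⟩)
  have hy : y ∈ I.adom := .inr (.inr ⟨r, x, hr⟩)
  obtain ⟨w, hxw, hyw⟩ := td.edges r x y hr
  refine ⟨_, td.lkSeq f hf hS w, .inr ⟨x, ⟨hxw, hIU hx⟩, rfl⟩, .inr ⟨y, ⟨hyw, hIU hy⟩, rfl⟩,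
    ?_, ?_⟩
  · rw [lkSeqOf, dif_pos hx]
    exact td.rep_lkSeq_eq f hf hS hx (hIU hx) ((td.cover x hx).nonempty.some).2 hxw
  · rw [lkSeqOf, dif_pos hy]
    exact td.rep_lkSeq_eq f hf hS hy (hIU hy) ((td.cover y hy).nonempty.some).2 hyw

end TreeDecomp

end Unraveling

theorem stmt3_general {C R A B : Type} (D : Interp C R A)
    {m : ℕ} (t : Fin m → A) (ht : ∀ i, t i ∈ D.adom)
    (l k : ℕ) (h2 : l < k)
    (D' : Interp C R B) (bt : Fin m → B)
    (htw : HasTW (D'.restrict {x | x ∉ Set.range bt}) l k)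
    (h : Hom D' D) (hb : ∀ i, h.toFun (bt i) = t i) :
    ∃ g : Hom D' (unravelLK D (Set.range t) l k),
      ∀ i, g.toFun (bt i) = Sum.inl (t i) := by
  obtain ⟨td⟩ := htw
  have hS : Set.range t ⊆ D.adom := Set.range_subset_iff.2 ht
  have hf : ∀ x ∈ D'.adom, h.toFun x ∈ D.adom := fun _ => h.map_adom
  have hk : 1 ≤ k := by omega
  have hbt : ∀ x, h.toFun x ∉ Set.range t → x ∉ Set.range bt := by
    rintro x hx ⟨i, rfl⟩
    exact hx ⟨i, (hb i).symm⟩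
  obtain ⟨g, hg⟩ := h.exists_lift_unravelLK (td.lkSeqOf h.toFun hf hS hk)
    (fun x => td.mem_lkSeqOf h.toFun hf hS hk)
    (fun r x y hr hx hy => td.exists_lkSeq_of_rn h.toFun hf hS hk
      (Interp.adom_restrict_subset _ _) ⟨hbt x hx, hbt y hy, hr⟩)
  exact ⟨g, fun i => (hg _ ⟨i, (hb i).symm⟩).trans (congrArg Sum.inl (hb i))⟩

/-- homomorphisms from pointed databases of treewidth `(ℓ,k)` into
`D` lift to the `(ℓ,k)`-unraveling of `D` up to `t`. -/
theorem stmt3 {C R A B : Type} (D : Interp C R A) (hfinD : D.FiniteFacts)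
    {m : ℕ} (t : Fin m → A) (ht : ∀ i, t i ∈ D.adom)
    (l k : ℕ) (h1 : 1 ≤ l) (h2 : l < k)
    (D' : Interp C R B) (hfin' : D'.FiniteFacts) (bt : Fin m → B)
    (htw : HasTW (D'.restrict {x | x ∉ Set.range bt}) l k)
    (h : Hom D' D) (hb : ∀ i, h.toFun (bt i) = t i) :
    ∃ g : Hom D' (unravelLK D (Set.range t) l k),
      ∀ i, g.toFun (bt i) = Sum.inl (t i) :=
  stmt3_general D t ht l k h2 D' bt htw h hb
end

section
/- Let Q(x̄) = (O, Σ, q) be an OMQ with O an ALCI ontology and q a bELIQ (an ELIQ or Boolean ELIQ), D a Σ-database, and ā ∈ adom(D)^{|x̄|}. Then: (1) ā is a certain answer to (O≈, Σ, q) on D, where O≈ consists of all ELI^u_⊥ concept inclusions entailed by O, if and only if ā is a certain answer to (O, Σ, q) on the tree unraveling D≈_∅ of D; and (2) D is satisfiable w.r.t. O≈ if and only if D≈_∅ is satisfiable w.r.t. O. -/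
set_option autoImplicit false

attribute [local instance] Classical.propDecidable

/-!
A homomorphism `f : D≈_∅ → M` into a model `M` of `O` induces a homomorphism from `D` into the
interpretation on the nonempty subsets of `M` that sends `a` to the set of `f`-images of the
copies of `a`. A disjunction-free `ELI^u_⊥` concept holds at a set iff it holds at all of its
members, so this interpretation is a model of `O≈` that satisfies the query only where `M` does.
This gives the forward implication of (1) and the backward implication of (2).

The other two implications are compactness. As `D` is finite, the part of `D≈_∅` of depth at
most `n` is described by an `ELI^u` concept. If for some `n` the ontology `O` entails that this
concept implies the query (respectively `⊥`), that inclusion belongs to `O≈`. Otherwise the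
counter-models for all `n` combine, in an ultraproduct over an ultrafilter on `ℕ` finer than
`atTop`, into a model of `O` (Łoś's theorem) that receives all of `D≈_∅` and refutes the
query.
-/

open Filter

variable {C R A : Type}

namespace Interp

lemma mem_adom_of_roleE {I : Interp C R A} {ρ : R ⊕ R} {a b : A} (h : I.roleE ρ a b) :
    a ∈ I.adom ∧ b ∈ I.adom := by
  cases ρ with
  | inl r => exact ⟨Or.inr (Or.inl ⟨r, b, h⟩), Or.inr (Or.inr ⟨r, a, h⟩)⟩
  | inr r => exact ⟨Or.inr (Or.inr ⟨r, b, h⟩), Or.inr (Or.inl ⟨r, a, h⟩)⟩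

namespace FiniteFacts

variable {D : Interp C R A}

lemma finite_cn (hfin : D.FiniteFacts) (a : A) : {c | D.cn c a}.Finite :=
  (hfin.1.image Prod.fst).subset fun c hc => ⟨(c, a), hc, rfl⟩

lemma finite_roleE (hfin : D.FiniteFacts) (a : A) :
    {e : (R ⊕ R) × A | D.roleE e.1 a e.2}.Finite := by
  refine ((hfin.2.image fun t => (Sum.inl t.1, t.2.2)).union
    (hfin.2.image fun t => (Sum.inr t.1, t.2.1))).subset ?_
  rintro ⟨ρ | ρ, b⟩ he
  · exact Or.inl ⟨(ρ, a, b), he, rfl⟩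
  · exact Or.inr ⟨(ρ, b, a), he, rfl⟩

lemma finite_adom (hfin : D.FiniteFacts) : D.adom.Finite := by
  refine (((hfin.1.image Prod.snd).union (hfin.2.image fun t => t.2.1)).union
    (hfin.2.image fun t => t.2.2)).subset ?_
  rintro a (⟨c, hc⟩ | ⟨r, b, hb⟩ | ⟨r, b, hb⟩)
  · exact Or.inl (Or.inl ⟨(c, a), hc, rfl⟩)
  · exact Or.inl (Or.inr ⟨(r, a, b), hb, rfl⟩)
  · exact Or.inr ⟨(r, b, a), hb, rfl⟩

end FiniteFacts

end Interp

lemma Hom.map_roleE {B : Type} {I : Interp C R A} {J : Interp C R B} (h : Hom I J)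
    {ρ : R ⊕ R} {a b : A} (hab : I.roleE ρ a b) : J.roleE ρ (h.toFun a) (h.toFun b) := by
  cases ρ with
  | inl r => exact h.map_rn r a b hab
  | inr r => exact h.map_rn r b a hab

lemma modelsELIUOnt_approx {Δ : Type} [Nonempty Δ] {O : Set (ALCI C R × ALCI C R)}
    {I : Interp C R Δ} (hI : ModelsALCIOnt I O) : ModelsELIUOnt I (ELIuApprox O) :=
  fun _ hp a ha => hp.2.2 Δ inferInstance I hI a ha

/-! ### The interpretation of nonempty subsets -/

def Interp.subsets {Δ : Type} (M : Interp C R Δ) : Interp C R {S : Set Δ // S.Nonempty} where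
  cn c S := ∀ y ∈ S.1, M.cn c y
  rn r S T := (∀ y ∈ S.1, ∃ y' ∈ T.1, M.rn r y y') ∧ (∀ y' ∈ T.1, ∃ y ∈ S.1, M.rn r y y')

section Subsets

variable {Δ : Type} {M : Interp C R Δ}

namespace Interp

lemma subsets_roleE {ρ : R ⊕ R} {S T : {S : Set Δ // S.Nonempty}} :
    M.subsets.roleE ρ S T ↔
      (∀ y ∈ S.1, ∃ y' ∈ T.1, M.roleE ρ y y') ∧ (∀ y' ∈ T.1, ∃ y ∈ S.1, M.roleE ρ y y') := by
  cases ρ with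
  | inl r => rfl
  | inr r => exact and_comm

end Interp

namespace ELIU

lemma sem_of_sem_subsets :
    ∀ (X : ELIU C R) {S : {S : Set Δ // S.Nonempty}}, X.sem M.subsets S → ∀ y ∈ S.1, X.sem M y
  | .top, _, _, _, _ => trivial
  | .bot, _, h, _, _ => h.elim
  | .cn _, _, h, y, hy => h y hy
  | .inter X Y, _, h, y, hy => ⟨sem_of_sem_subsets X h.1 y hy, sem_of_sem_subsets Y h.2 y hy⟩
  | .union X Y, _, h, y, hy =>
      h.imp (fun h => sem_of_sem_subsets X h y hy) (fun h => sem_of_sem_subsets Y h y hy)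
  | .exR _ X, _, ⟨T, hST, hT⟩, y, hy => by
      obtain ⟨y', hy', hyy'⟩ := (Interp.subsets_roleE.1 hST).1 y hy
      exact ⟨y', hyy', sem_of_sem_subsets X hT y' hy'⟩
  | .exU X, _, ⟨T, hT⟩, _, _ =>
      let ⟨y', hy'⟩ := T.2
      ⟨y', sem_of_sem_subsets X hT y' hy'⟩

lemma sem_subsets_of_forall_sem :
    ∀ (X : ELIU C R), X.disjFree → ∀ {S : {S : Set Δ // S.Nonempty}},
      (∀ y ∈ S.1, X.sem M y) → X.sem M.subsets S
  | .top, _, _, _ => trivial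
  | .bot, _, S, h => let ⟨y, hy⟩ := S.2; h y hy
  | .cn _, _, _, h => h
  | .inter X Y, hd, _, h =>
      ⟨sem_subsets_of_forall_sem X hd.1 fun y hy => (h y hy).1,
        sem_subsets_of_forall_sem Y hd.2 fun y hy => (h y hy).2⟩
  | .exR ρ X, hd, S, h => by
      let T : {S : Set Δ // S.Nonempty} :=
        ⟨{y' | X.sem M y' ∧ ∃ y ∈ S.1, M.roleE ρ y y'},
          let ⟨y, hy⟩ := S.2; let ⟨y', hyy', hy'⟩ := h y hy; ⟨y', hy', y, hy, hyy'⟩⟩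
      refine ⟨T, Interp.subsets_roleE.2 ⟨fun y hy => ?_, fun y' hy' => hy'.2⟩,
        sem_subsets_of_forall_sem X hd fun y' hy' => hy'.1⟩
      obtain ⟨y', hyy', hy'⟩ := h y hy
      exact ⟨y', ⟨hy', y, hy, hyy'⟩, hyy'⟩
  | .exU X, hd, S, h =>
      let ⟨y, hy⟩ := S.2
      let ⟨y', hy'⟩ := h y hy
      ⟨⟨{y'}, Set.singleton_nonempty y'⟩,
        sem_subsets_of_forall_sem X hd fun _ h => (Set.mem_singleton_iff.1 h) ▸ hy'⟩

end ELIU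

lemma modelsELIUOnt_subsets {T : Set (ELIU C R × ELIU C R)} (hT : ∀ p ∈ T, p.2.disjFree)
    (hM : ModelsELIUOnt M T) : ModelsELIUOnt M.subsets T :=
  fun p hp _ hS => ELIU.sem_subsets_of_forall_sem p.2 (hT p hp) fun y hy =>
    hM p hp y (ELIU.sem_of_sem_subsets p.1 hS y hy)

variable {D : Interp C R A}

def Hom.copies (f : Hom (treeUnravel D ∅) M) (a : A) : {S : Set Δ // S.Nonempty} :=
  ⟨Set.range fun p : UPath D a => f.toFun (.inr ⟨a, p⟩),
    Set.range_nonempty_iff_nonempty.2 ⟨.nil a⟩⟩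

def Hom.toSubsets (f : Hom (treeUnravel D ∅) M) : Hom D M.subsets where
  toFun := f.copies
  map_cn c a h := by
    rintro _ ⟨p, rfl⟩
    exact f.map_cn c _ h
  map_rn r a b h := by
    refine ⟨?_, ?_⟩
    · rintro _ ⟨p, rfl⟩
      exact ⟨_, ⟨p.cons (.inl r) b h, rfl⟩,
        f.map_rn r _ _ (Or.inr (Or.inl ⟨a, p, b, h, rfl, rfl⟩))⟩
    · rintro _ ⟨p, rfl⟩
      exact ⟨_, ⟨p.cons (.inr r) a h, rfl⟩,
        f.map_rn r _ _ (Or.inr (Or.inr (Or.inl ⟨b, p, a, h, rfl, rfl⟩)))⟩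

end Subsets

/-! ### Ultraproducts -/

section Ultraproduct

variable {ι : Type} (U : Ultrafilter ι) {Δ : ι → Type} (M : ∀ i, Interp C R (Δ i))

/-- No quotient is needed: the language has no equality. -/
def Interp.ultraproduct : Interp C R (∀ i, Δ i) where
  cn c φ := {i | (M i).cn c (φ i)} ∈ U
  rn r φ ψ := {i | (M i).rn r (φ i) (ψ i)} ∈ U

variable {U M}

lemma Interp.ultraproduct_roleE {ρ : R ⊕ R} {φ ψ : ∀ i, Δ i} :
    (Interp.ultraproduct U M).roleE ρ φ ψ ↔ {i | (M i).roleE ρ (φ i) (ψ i)} ∈ U := by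
  cases ρ <;> rfl

lemma Ultrafilter.exists_pi_mem_iff [∀ i, Nonempty (Δ i)] {P : ∀ i, Δ i → Prop} :
    (∃ ψ : ∀ i, Δ i, {i | P i (ψ i)} ∈ U) ↔ {i | ∃ w, P i w} ∈ U := by
  refine ⟨fun ⟨ψ, hψ⟩ => mem_of_superset hψ fun i hi => ⟨ψ i, hi⟩, fun h => ?_⟩
  exact ⟨fun i => Classical.epsilon (P i),
    mem_of_superset h fun i hi => Classical.epsilon_spec (p := P i) hi⟩

lemma ELIU.sem_ultraproduct [∀ i, Nonempty (Δ i)] :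
    ∀ (X : ELIU C R) (φ : ∀ i, Δ i),
      X.sem (Interp.ultraproduct U M) φ ↔ {i | X.sem (M i) (φ i)} ∈ U
  | .top, _ => iff_of_true trivial univ_mem
  | .bot, _ => iff_of_false id (by simp [ELIU.sem])
  | .cn _, _ => Iff.rfl
  | .inter X Y, φ => (and_congr (sem_ultraproduct X φ) (sem_ultraproduct Y φ)).trans
      inter_mem_iff.symm
  | .union X Y, φ => (or_congr (sem_ultraproduct X φ) (sem_ultraproduct Y φ)).trans
      Ultrafilter.union_mem_iff.symm
  | .exR ρ X, φ => (exists_congr fun ψ =>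
      (Interp.ultraproduct_roleE.and (sem_ultraproduct X ψ)).trans inter_mem_iff.symm).trans
        (Ultrafilter.exists_pi_mem_iff (P := fun i w => (M i).roleE ρ (φ i) w ∧ X.sem (M i) w))
  | .exU X, _ => (exists_congr fun ψ => sem_ultraproduct X ψ).trans
      Ultrafilter.exists_pi_mem_iff

lemma ALCI.sem_ultraproduct [∀ i, Nonempty (Δ i)] :
    ∀ (X : ALCI C R) (φ : ∀ i, Δ i),
      X.sem (Interp.ultraproduct U M) φ ↔ {i | X.sem (M i) (φ i)} ∈ U
  | .top, _ => iff_of_true trivial univ_mem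
  | .cn _, _ => Iff.rfl
  | .neg X, φ => (not_congr (sem_ultraproduct X φ)).trans Ultrafilter.compl_mem_iff_notMem.symm
  | .inter X Y, φ => (and_congr (sem_ultraproduct X φ) (sem_ultraproduct Y φ)).trans
      inter_mem_iff.symm
  | .exR ρ X, φ => (exists_congr fun ψ =>
      (Interp.ultraproduct_roleE.and (sem_ultraproduct X ψ)).trans inter_mem_iff.symm).trans
        (Ultrafilter.exists_pi_mem_iff (P := fun i w => (M i).roleE ρ (φ i) w ∧ X.sem (M i) w))

lemma modelsALCIOnt_ultraproduct [∀ i, Nonempty (Δ i)] {O : Set (ALCI C R × ALCI C R)}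
    (hM : ∀ i, ModelsALCIOnt (M i) O) : ModelsALCIOnt (Interp.ultraproduct U M) O := by
  intro p hp φ hφ
  rw [ALCI.sem_ultraproduct] at hφ ⊢
  exact mem_of_superset hφ fun i hi => hM i p hp (φ i) hi

lemma ELIU.not_sem_ultraproduct [∀ i, Nonempty (Δ i)] {X : ELIU C R} {φ : ∀ i, Δ i}
    (h : ∀ i, ¬ X.sem (M i) (φ i)) : ¬ X.sem (Interp.ultraproduct U M) φ := by
  rw [ELIU.sem_ultraproduct, Set.eq_empty_of_forall_notMem h]
  exact U.empty_notMem

end Ultraproduct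

/-! ### Concepts describing the finite-depth unravelings of a finite database -/

namespace ELIU

noncomputable def finInter {ι : Type} (s : Finset ι) (F : ι → ELIU C R) : ELIU C R :=
  s.toList.foldr (fun i X => .inter (F i) X) .top

variable {ι : Type} {s : Finset ι} {F : ι → ELIU C R}

lemma sem_finInter {Δ : Type} {I : Interp C R Δ} {z : Δ} :
    (finInter s F).sem I z ↔ ∀ i ∈ s, (F i).sem I z := by
  simp_rw [finInter, ← Finset.mem_toList]
  induction s.toList with
  | nil => simp [sem]
  | cons i l ih => simp [sem, ih]

lemma disjFree_finInter (hF : ∀ i ∈ s, (F i).disjFree) : (finInter s F).disjFree := by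
  simp_rw [← Finset.mem_toList] at hF
  unfold finInter
  generalize s.toList = l at hF ⊢
  induction l with
  | nil => trivial
  | cons i l ih =>
    exact ⟨hF i List.mem_cons_self, ih fun j hj => hF j (List.mem_cons_of_mem _ hj)⟩

end ELIU

namespace Interp

variable (D : Interp C R A) (hfin : D.FiniteFacts)

noncomputable def labelConcept (a : A) : ELIU C R :=
  ELIU.finInter (hfin.finite_cn a).toFinset .cn

/-- Holds at `z` iff the paths of length at most `n` starting at `a` can be mapped
homomorphically into the interpretation with `a` sent to `z`. -/
noncomputable def unravelConcept : ℕ → A → ELIU C R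
  | 0, a => D.labelConcept hfin a
  | n + 1, a => .inter (D.labelConcept hfin a)
      (ELIU.finInter (hfin.finite_roleE a).toFinset fun e => .exR e.1 (unravelConcept n e.2))

noncomputable def unravelConceptU (n : ℕ) : ELIU C R :=
  ELIU.finInter hfin.finite_adom.toFinset fun a => .exU (D.unravelConcept hfin n a)

variable {D hfin}

lemma disjFree_unravelConcept : ∀ n a, (D.unravelConcept hfin n a).disjFree
  | 0, _ => ELIU.disjFree_finInter fun _ _ => trivial
  | n + 1, _ => ⟨ELIU.disjFree_finInter fun _ _ => trivial,
      ELIU.disjFree_finInter fun e _ => disjFree_unravelConcept n e.2⟩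

lemma disjFree_unravelConceptU (n : ℕ) : (D.unravelConceptU hfin n).disjFree :=
  ELIU.disjFree_finInter fun a _ => disjFree_unravelConcept n a

variable {Δ : Type} {I : Interp C R Δ}

lemma cn_of_sem_unravelConcept {n : ℕ} {a : A} {z : Δ} (h : (D.unravelConcept hfin n a).sem I z)
    {c : C} (hc : D.cn c a) : I.cn c z := by
  have hl : (D.labelConcept hfin a).sem I z := by
    cases n
    exacts [h, h.1]
  exact ELIU.sem_finInter.1 hl c ((hfin.finite_cn a).mem_toFinset.2 hc)

lemma exists_roleE_of_sem_unravelConcept {n : ℕ} {a b : A} {z : Δ}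
    (h : (D.unravelConcept hfin (n + 1) a).sem I z) {ρ : R ⊕ R} (hab : D.roleE ρ a b) :
    ∃ w, I.roleE ρ z w ∧ (D.unravelConcept hfin n b).sem I w :=
  ELIU.sem_finInter.1 h.2 (ρ, b) ((hfin.finite_roleE a).mem_toFinset.2 hab)

lemma sem_unravelConcept_of_exists_roleE {n : ℕ} {a : A} {z : Δ}
    (hl : (D.labelConcept hfin a).sem I z)
    (h : ∀ ρ b, D.roleE ρ a b → ∃ w, I.roleE ρ z w ∧ (D.unravelConcept hfin n b).sem I w) :
    (D.unravelConcept hfin (n + 1) a).sem I z :=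
  ⟨hl, ELIU.sem_finInter.2 fun e he => h e.1 e.2 ((hfin.finite_roleE a).mem_toFinset.1 he)⟩

end Interp

lemma Hom.sem_labelConcept {D : Interp C R A} (hfin : D.FiniteFacts) {Δ : Type}
    {I : Interp C R Δ} (h : Hom D I) (a : A) : (D.labelConcept hfin a).sem I (h.toFun a) :=
  ELIU.sem_finInter.2 fun c hc => h.map_cn c a ((hfin.finite_cn a).mem_toFinset.1 hc)

lemma Hom.sem_unravelConcept {D : Interp C R A} (hfin : D.FiniteFacts) {Δ : Type}
    {I : Interp C R Δ} (h : Hom D I) : ∀ n a, (D.unravelConcept hfin n a).sem I (h.toFun a)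
  | 0, a => h.sem_labelConcept hfin a
  | n + 1, a => Interp.sem_unravelConcept_of_exists_roleE (h.sem_labelConcept hfin a)
      fun _ b hab => ⟨h.toFun b, h.map_roleE hab, h.sem_unravelConcept hfin n b⟩

lemma Hom.sem_unravelConceptU {D : Interp C R A} (hfin : D.FiniteFacts) {Δ : Type}
    {I : Interp C R Δ} (h : Hom D I) (n : ℕ) (z : Δ) : (D.unravelConceptU hfin n).sem I z :=
  ELIU.sem_finInter.2 fun a _ => ⟨h.toFun a, h.sem_unravelConcept hfin n a⟩

/-! ### Compactness: homomorphisms from `D≈_∅` into ultraproducts -/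

namespace UPath

variable {D : Interp C R A}

def length : {b : A} → UPath D b → ℕ
  | _, .nil _ => 0
  | _, .cons p _ _ _ => p.length + 1

def start : {b : A} → UPath D b → A
  | _, .nil a => a
  | _, .cons p _ _ _ => p.start

lemma start_mem_adom : ∀ {b : A} (p : UPath D b), b ∈ D.adom → p.start ∈ D.adom
  | _, .nil _, hb => hb
  | _, .cons p _ _ h, _ => p.start_mem_adom (Interp.mem_adom_of_roleE h).1

end UPath

namespace Interp

section PathImage

variable {D : Interp C R A} {hfin : D.FiniteFacts} {Δ : Type} [Nonempty Δ]

variable (D hfin) in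
/-- Images of the paths from `p.start`, chosen step by step inside an element `z` satisfying
`D.unravelConcept hfin n p.start`. -/
noncomputable def pathImage (I : Interp C R Δ) (n : ℕ) (z : Δ) : {b : A} → UPath D b → Δ
  | _, .nil _ => z
  | _, .cons p ρ c _ => Classical.epsilon fun w =>
      I.roleE ρ (pathImage I n z p) w ∧ (D.unravelConcept hfin (n - (p.length + 1)) c).sem I w

variable {I : Interp C R Δ} {n : ℕ} {z : Δ}

lemma sem_pathImage_cons {b c : A} {p : UPath D b} {ρ : R ⊕ R} (h : D.roleE ρ b c)
    (hp : (D.unravelConcept hfin (n - p.length) b).sem I (pathImage D hfin I n z p))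
    (hlen : p.length + 1 ≤ n) :
    I.roleE ρ (pathImage D hfin I n z p) (pathImage D hfin I n z (p.cons ρ c h)) ∧
      (D.unravelConcept hfin (n - (p.length + 1)) c).sem I
        (pathImage D hfin I n z (p.cons ρ c h)) := by
  rw [show n - p.length = n - (p.length + 1) + 1 by omega] at hp
  exact Classical.epsilon_spec (exists_roleE_of_sem_unravelConcept hp h)

lemma sem_pathImage {a : A} (hz : (D.unravelConcept hfin n a).sem I z) :
    ∀ {b : A} (p : UPath D b), p.start = a → p.length ≤ n →
      (D.unravelConcept hfin (n - p.length) b).sem I (pathImage D hfin I n z p)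
  | _, .nil _, rfl, _ => hz
  | _, .cons p _ _ h, hs, hlen => (sem_pathImage_cons h (sem_pathImage hz p hs (by
      simp only [UPath.length] at hlen; omega)) hlen).2

end PathImage

variable {D : Interp C R A} (hfin : D.FiniteFacts) {U : Ultrafilter ℕ}
  {Δ : ℕ → Type} [∀ n, Nonempty (Δ n)] {M : ∀ n, Interp C R (Δ n)}

lemma exists_hom_treeUnravel_ultraproduct (hU : (U : Filter ℕ) ≤ atTop) (w : ∀ n, A → Δ n)
    (hw : ∀ n, ∀ a ∈ D.adom, (D.unravelConcept hfin n a).sem (M n) (w n a)) :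
    ∃ g : Hom (treeUnravel D ∅) (ultraproduct U M),
      ∀ a, g.toFun (.inr ⟨a, .nil a⟩) = fun n => w n a := by
  -- a path `p` is mapped correctly into the `n`-th factor as soon as `p.length ≤ n`
  have hsem : ∀ {b : A} (p : UPath D b), b ∈ D.adom → ∀ᶠ n in U,
      (D.unravelConcept hfin (n - p.length) b).sem (M n)
        (pathImage D hfin (M n) n (w n p.start) p) :=
    fun p hb => Eventually.mono (hU (eventually_ge_atTop p.length)) fun n hn =>
      sem_pathImage (hw n _ (p.start_mem_adom hb)) p rfl hn
  have hstep : ∀ {b c : A} (p : UPath D b) {ρ : R ⊕ R} (h : D.roleE ρ b c), ∀ᶠ n in U,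
      (M n).roleE ρ (pathImage D hfin (M n) n (w n p.start) p)
        (pathImage D hfin (M n) n (w n p.start) (p.cons ρ c h)) :=
    fun p _ h => ((hsem p (mem_adom_of_roleE h).1).and
      (hU (eventually_ge_atTop (p.length + 1)))).mono fun _ hn => (sem_pathImage_cons h hn.1 hn.2).1
  refine ⟨⟨fun
    | .inl _ => fun _ => Classical.arbitrary _
    | .inr ⟨_, p⟩ => fun n => pathImage D hfin (M n) n (w n p.start) p, ?_, ?_⟩, fun _ => rfl⟩
  · rintro c (_ | ⟨b, p⟩) h
    · exact h.1.elim
    · exact (hsem p (Or.inl ⟨c, h⟩)).mono fun n hn => cn_of_sem_unravelConcept hn h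
  · rintro r x y (⟨_, _, h, -⟩ | ⟨a, p, b, h, rfl, rfl⟩ | ⟨a, p, b, h, rfl, rfl⟩ |
      ⟨_, _, _, h, -⟩ | ⟨_, _, _, h, -⟩)
    · exact h.elim
    · exact hstep p h
    · exact hstep p h
    · exact h.elim
    · exact h.elim

lemma nonempty_hom_treeUnravel_ultraproduct (hU : (U : Filter ℕ) ≤ atTop) {z : ∀ n, Δ n}
    (hz : ∀ n, (D.unravelConceptU hfin n).sem (M n) (z n)) :
    Nonempty (Hom (treeUnravel D ∅) (ultraproduct U M)) := by
  obtain ⟨g, -⟩ := exists_hom_treeUnravel_ultraproduct hfin hU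
    (fun n a => Classical.epsilon fun y => (D.unravelConcept hfin n a).sem (M n) y)
    fun n a ha => Classical.epsilon_spec
      (ELIU.sem_finInter.1 (hz n) a (hfin.finite_adom.mem_toFinset.2 ha))
  exact ⟨g⟩

lemma exists_hom_treeUnravel_ultraproduct_root (hU : (U : Filter ℕ) ≤ atTop) {a : A}
    {z : ∀ n, Δ n} (hz : ∀ n, (ELIU.inter (D.unravelConcept hfin n a)
      (D.unravelConceptU hfin n)).sem (M n) (z n)) :
    ∃ g : Hom (treeUnravel D ∅) (ultraproduct U M), g.toFun (.inr ⟨a, .nil a⟩) = z := by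
  let w n := Function.update
    (fun b => Classical.epsilon fun y => (D.unravelConcept hfin n b).sem (M n) y) a (z n)
  obtain ⟨g, hg⟩ := exists_hom_treeUnravel_ultraproduct hfin hU w fun n b hb => by
    rcases eq_or_ne b a with rfl | hba
    · simpa [w] using (hz n).1
    · simpa [w, hba] using Classical.epsilon_spec
        (ELIU.sem_finInter.1 (hz n).2 b (hfin.finite_adom.mem_toFinset.2 hb))
  exact ⟨g, (hg a).trans (funext fun n => Function.update_self ..)⟩

end Interp

section Directions

variable {O : Set (ALCI C R × ALCI C R)} {D : Interp C R A}

lemma disjFree_snd_of_mem_ELIuApprox {p : ELIU C R × ELIU C R} (hp : p ∈ ELIuApprox O) :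
    p.2.disjFree :=
  hp.2.1

lemma exists_mem_approx_or_counterModels (X : ℕ → ELIU C R) (Y : ELIU C R)
    (hX : ∀ n, (X n).disjFree) (hY : Y.disjFree) :
    (∃ n, (X n, Y) ∈ ELIuApprox O) ∨
      ∃ (Δ : ℕ → Type) (_ : ∀ n, Nonempty (Δ n)) (M : ∀ n, Interp C R (Δ n)) (z : ∀ n, Δ n),
        ∀ n, ModelsALCIOnt (M n) O ∧ (X n).sem (M n) (z n) ∧ ¬ Y.sem (M n) (z n) := by
  refine or_iff_not_imp_left.2 fun h => ?_
  have h' : ∀ n, ∃ (Δ : Type) (_ : Nonempty Δ) (M : Interp C R Δ) (z : Δ),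
      ModelsALCIOnt M O ∧ (X n).sem M z ∧ ¬ Y.sem M z := fun n => by
    by_contra! hn
    exact h ⟨n, hX n, hY, fun Δ hΔ M hM z hz => hn Δ hΔ M z hM hz⟩
  choose Δ hΔ M z hz using h'
  exact ⟨Δ, hΔ, M, z, hz⟩

variable (q : BELIQ C R) (t : Fin q.arity → A)

theorem certain_treeUnravel_of_certain_approx
    (h : Certain (fun _ I => ModelsELIUOnt I (ELIuApprox O)) D (fun _ I v => q.Eval I v) t) :
    Certain (fun _ I => ModelsALCIOnt I O) (treeUnravel D ∅) (fun _ I v => q.Eval I v)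
      (fun i => Sum.inr ⟨t i, UPath.nil (t i)⟩) := by
  intro Δ hΔ M hM f
  have hq := h _ ⟨⟨Set.univ, Set.univ_nonempty⟩⟩ M.subsets
    (modelsELIUOnt_subsets (fun _ => disjFree_snd_of_mem_ELIuApprox) (modelsELIUOnt_approx hM))
    f.toSubsets
  cases q with
  | q1 X => exact ELIU.sem_of_sem_subsets X hq _ ⟨.nil _, rfl⟩
  | q0 X =>
      obtain ⟨S, hS⟩ := hq
      obtain ⟨y, hy⟩ := S.2
      exact ⟨y, ELIU.sem_of_sem_subsets X hS y hy⟩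

theorem certain_approx_of_certain_treeUnravel (hq : q.wf) (hfin : D.FiniteFacts)
    (h : Certain (fun _ I => ModelsALCIOnt I O) (treeUnravel D ∅) (fun _ I v => q.Eval I v)
      (fun i => Sum.inr ⟨t i, UPath.nil (t i)⟩)) :
    Certain (fun _ I => ModelsELIUOnt I (ELIuApprox O)) D (fun _ I v => q.Eval I v) t := by
  intro Δ hΔ I hI g
  have hU := Ultrafilter.of_le (atTop : Filter ℕ)
  cases q with
  | q1 X =>
      let a := t ⟨0, Nat.zero_lt_one⟩
      rcases exists_mem_approx_or_counterModels
          (fun n => .inter (D.unravelConcept hfin n a) (D.unravelConceptU hfin n)) X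
          (fun n => ⟨Interp.disjFree_unravelConcept n a, Interp.disjFree_unravelConceptU n⟩)
          hq.1 with ⟨n, hn⟩ | ⟨Δ', _, M, z, hM⟩
      · exact hI _ hn (g.toFun a)
          ⟨g.sem_unravelConcept hfin n a, g.sem_unravelConceptU hfin n _⟩
      · obtain ⟨f, hf⟩ := Interp.exists_hom_treeUnravel_ultraproduct_root hfin hU
          fun n => (hM n).2.1
        have hX : X.sem _ (f.toFun (.inr ⟨a, .nil a⟩)) :=
          h _ inferInstance _ (modelsALCIOnt_ultraproduct fun n => (hM n).1) f
        rw [hf] at hX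
        exact (ELIU.not_sem_ultraproduct (fun n => (hM n).2.2) hX).elim
  | q0 X =>
      rcases exists_mem_approx_or_counterModels (D.unravelConceptU hfin) (.exU X)
          Interp.disjFree_unravelConceptU hq.1 with ⟨n, hn⟩ | ⟨Δ', _, M, z, hM⟩
      · obtain ⟨y⟩ := hΔ
        exact hI _ hn y (g.sem_unravelConceptU hfin n y)
      · obtain ⟨f⟩ := Interp.nonempty_hom_treeUnravel_ultraproduct hfin hU fun n => (hM n).2.1
        exact (ELIU.not_sem_ultraproduct (φ := z) (fun n => (hM n).2.2)
          (h _ inferInstance _ (modelsALCIOnt_ultraproduct fun n => (hM n).1) f)).elim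

theorem satisfiable_treeUnravel_of_satisfiable_approx (hfin : D.FiniteFacts)
    (h : Satisfiable (fun _ I => ModelsELIUOnt I (ELIuApprox O)) D) :
    Satisfiable (fun _ I => ModelsALCIOnt I O) (treeUnravel D ∅) := by
  obtain ⟨Δ, ⟨y⟩, I, ⟨g⟩, hI⟩ := h
  rcases exists_mem_approx_or_counterModels (O := O) (D.unravelConceptU hfin) .bot
      Interp.disjFree_unravelConceptU trivial with ⟨n, hn⟩ | ⟨Δ', _, M, z, hM⟩
  · exact (hI _ hn y (g.sem_unravelConceptU hfin n y)).elim
  · exact ⟨_, inferInstance, Interp.ultraproduct (Ultrafilter.of atTop) M,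
      Interp.nonempty_hom_treeUnravel_ultraproduct hfin (Ultrafilter.of_le _)
        fun n => (hM n).2.1,
      modelsALCIOnt_ultraproduct fun n => (hM n).1⟩

theorem satisfiable_approx_of_satisfiable_treeUnravel
    (h : Satisfiable (fun _ I => ModelsALCIOnt I O) (treeUnravel D ∅)) :
    Satisfiable (fun _ I => ModelsELIUOnt I (ELIuApprox O)) D := by
  obtain ⟨Δ, hΔ, M, ⟨f⟩, hM⟩ := h
  exact ⟨_, ⟨⟨Set.univ, Set.univ_nonempty⟩⟩, M.subsets, ⟨f.toSubsets⟩,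
    modelsELIUOnt_subsets (fun _ => disjFree_snd_of_mem_ELIuApprox) (modelsELIUOnt_approx hM)⟩

end Directions

theorem stmt8_general {C R A : Type} (O : Set (ALCI C R × ALCI C R))
    (q : BELIQ C R) (hq : q.wf)
    (D : Interp C R A) (hfin : D.FiniteFacts)
    (t : Fin q.arity → A) :
    (Certain (fun _ I => ModelsELIUOnt I (ELIuApprox O)) D
        (fun _ I v => q.Eval I v) t ↔
      Certain (fun _ I => ModelsALCIOnt I O) (treeUnravel D ∅)
        (fun _ I v => q.Eval I v)
        (fun i => Sum.inr ⟨t i, UPath.nil (t i)⟩)) ∧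
    (Satisfiable (fun _ I => ModelsELIUOnt I (ELIuApprox O)) D ↔
      Satisfiable (fun _ I => ModelsALCIOnt I O) (treeUnravel D ∅)) :=
  ⟨⟨certain_treeUnravel_of_certain_approx q t,
      certain_approx_of_certain_treeUnravel q t hq hfin⟩,
    ⟨satisfiable_treeUnravel_of_satisfiable_approx hfin,
      satisfiable_approx_of_satisfiable_treeUnravel⟩⟩

/-- for an OMQ `(O, Σ, q)` with `O` an ALCI ontology and `q` a
bELIQ: (1) `t` is a certain answer w.r.t. the ontology `O≈` of all `ELI^u_⊥`
concept inclusions entailed by `O` iff `t` is a certain answer w.r.t. `O` on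
the tree unraveling `D≈_∅`; (2) `D` is satisfiable w.r.t. `O≈` iff `D≈_∅` is
satisfiable w.r.t. `O`. -/
theorem stmt8 {C R A : Type} (O : Set (ALCI C R × ALCI C R)) (hOfin : O.Finite)
    (SC : Set C) (SR : Set R) (q : BELIQ C R) (hq : q.wf)
    (D : Interp C R A) (hfin : D.FiniteFacts) (hsig : D.InSig SC SR)
    (t : Fin q.arity → A) (ht : ∀ i, t i ∈ D.adom) :
    (Certain (fun _ I => ModelsELIUOnt I (ELIuApprox O)) D
        (fun _ I v => q.Eval I v) t ↔
      Certain (fun _ I => ModelsALCIOnt I O) (treeUnravel D ∅)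
        (fun _ I v => q.Eval I v)
        (fun i => Sum.inr ⟨t i, UPath.nil (t i)⟩)) ∧
    (Satisfiable (fun _ I => ModelsELIUOnt I (ELIuApprox O)) D ↔
      Satisfiable (fun _ I => ModelsALCIOnt I O) (treeUnravel D ∅)) :=
  stmt8_general O q hq D hfin t
end

section
/- For m ≥ 2, let q_m be the Boolean conjunctive query whose canonical database is an m × m grid: variables x_{i,j} for i,j ∈ {1,...,m}, with an atom r(x_{i,j}, x_{i',j'}) whenever i+j is even and |i−i'| + |j−j'| = 1, and an atom A_{i,j}(x_{i,j}) for every i,j, where the A_{i,j} are pairwise distinct concept names. Then the canonical database of q_m has treewidth (1, m²) but, for any interpretation U of treewidth (1, m²−1) in which no element satisfies two distinct concept names A_{i,j} and A_{i',j'}, there is no homomorphism from q_m to U. -/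
set_option autoImplicit false

attribute [local instance] Classical.propDecidable

/-!
Distinct concept names make a homomorphism `h` from the grid into `U` injective. In a tree
decomposition whose distinct bags share at most one element, deleting a tree edge `uw` splits the
tree in two, and only the element of `bag u ∩ bag w` can have bags on both sides. The grid stays
connected after deleting any one vertex, so if some `h p` is missing from `bag u`, walking from `u`
towards the bags of `h p` shows that `bag u` contains at most one grid image. A bag containing an
edge of the grid contains two, so it must contain all `m²` images, more than its size allows.
-/

namespace SimpleGraph

variable {V : Type} {G : SimpleGraph V} {u w : V}

theorem Preconnected.reachable_deleteEdges_or (hG : G.Preconnected) (huw : u ≠ w) (x : V) :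
    (G.deleteEdges {s(u, w)}).Reachable x u ∨ (G.deleteEdges {s(u, w)}).Reachable x w := by
  obtain ⟨p, hp⟩ := (hG x u).exists_isPath
  by_cases hpe : s(u, w) ∈ p.edges
  · have hw := p.snd_mem_support_of_mem_edges hpe
    have hu := Walk.endpoint_notMem_support_takeUntil hp hw huw
    exact .inr ⟨(p.takeUntil w hw).toDeleteEdge _ fun he =>
      hu (Walk.fst_mem_support_of_mem_edges _ he)⟩
  · exact .inl ⟨p.toDeleteEdge _ hpe⟩

theorem Preconnected.exists_adj_reachable_deleteEdges (hG : G.Preconnected) {y : V}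
    (huy : u ≠ y) : ∃ w, G.Adj u w ∧ (G.deleteEdges {s(u, w)}).Reachable w y := by
  obtain ⟨p, hp⟩ := (hG u y).exists_isPath
  cases p with
  | nil => exact absurd rfl huy
  | cons hadj q =>
    have hu := ((Walk.cons_isPath_iff hadj q).1 hp).2
    exact ⟨_, hadj, ⟨q.toDeleteEdge _ fun he => hu (q.fst_mem_support_of_mem_edges he)⟩⟩

theorem IsAcyclic.mem_edges_of_reachable_deleteEdges (hG : G.IsAcyclic) (huw : G.Adj u w)
    {x y : V} (hx : (G.deleteEdges {s(u, w)}).Reachable x u)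
    (hy : (G.deleteEdges {s(u, w)}).Reachable y w) (p : G.Walk x y) : s(u, w) ∈ p.edges :=
  p.mem_edges_of_not_reachable_deleteEdges fun hxy =>
    isAcyclic_iff_forall_adj_isBridge.1 hG huw (hx.symm.trans (hxy.trans hy))

end SimpleGraph

namespace SimpleGraph

variable {α β : Type} {G : SimpleGraph α} {H : SimpleGraph β} {E : Set (α × β)}

theorem boxProd_induce_reachable_of_row (hH : H.Preconnected) {a : α} (ha : ∀ b, (a, b) ∉ E)
    (b b' : β) : ((G □ H).induce Eᶜ).Reachable ⟨(a, b), ha b⟩ ⟨(a, b'), ha b'⟩ :=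
  (hH b b').map (G' := (G □ H).induce Eᶜ)
    { toFun := fun b => ⟨(a, b), ha b⟩
      map_rel' := fun h => boxProd_adj.2 (.inr ⟨h, rfl⟩) }

theorem boxProd_induce_reachable_of_col (hG : G.Preconnected) {b : β} (hb : ∀ a, (a, b) ∉ E)
    (a a' : α) : ((G □ H).induce Eᶜ).Reachable ⟨(a, b), hb a⟩ ⟨(a', b), hb a'⟩ :=
  (hG a a').map (G' := (G □ H).induce Eᶜ)
    { toFun := fun a => ⟨(a, b), hb a⟩
      map_rel' := fun h => boxProd_adj.2 (.inl ⟨h, rfl⟩) }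

theorem Preconnected.boxProd_induce_compl [Nontrivial α] [Nontrivial β] (hG : G.Preconnected)
    (hH : H.Preconnected) (hE : E.Subsingleton) : ((G □ H).induce Eᶜ).Preconnected := by
  obtain ⟨a₀, ha₀⟩ : ∃ a, ∀ b, (a, b) ∉ E := by
    by_contra! h
    obtain ⟨a₁, a₂, hne⟩ := exists_pair_ne α
    obtain ⟨⟨b₁, h₁⟩, ⟨b₂, h₂⟩⟩ := And.intro (h a₁) (h a₂)
    exact hne (congrArg Prod.fst (hE h₁ h₂))
  obtain ⟨b₀, hb₀⟩ : ∃ b, ∀ a, (a, b) ∉ E := by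
    by_contra! h
    obtain ⟨b₁, b₂, hne⟩ := exists_pair_ne β
    obtain ⟨⟨a₁, h₁⟩, ⟨a₂, h₂⟩⟩ := And.intro (h b₁) (h b₂)
    exact hne (congrArg Prod.snd (hE h₁ h₂))
  suffices h : ∀ x : ↥Eᶜ, ((G □ H).induce Eᶜ).Reachable x ⟨(a₀, b₀), ha₀ b₀⟩ from
    fun x y => (h x).trans (h y).symm
  rintro ⟨⟨a, b⟩, hab⟩
  by_cases hcol : ∃ a', (a', b) ∈ E
  · have hrow : ∀ b', (a, b') ∉ E := by
      obtain ⟨a', ha'⟩ := hcol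
      intro b' hb'
      obtain ⟨rfl, rfl⟩ := Prod.ext_iff.1 (hE ha' hb')
      exact hab ha'
    exact (boxProd_induce_reachable_of_row hH hrow b b₀).trans
      (boxProd_induce_reachable_of_col hG hb₀ a a₀)
  · exact (boxProd_induce_reachable_of_col hG (not_exists.1 hcol) a a₀).trans
      (boxProd_induce_reachable_of_row hH ha₀ b b₀)

end SimpleGraph

namespace TreeDecomp

open SimpleGraph

variable {C R B : Type} {U : Interp C R B} {ℓ k : ℕ} (td : TreeDecomp U ℓ k)

theorem mem_bag_of_reachable_deleteEdges {u w : td.V} (huw : td.G.Adj u w) {b : B}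
    (hb : b ∈ U.adom) {x y : td.V} (hx : b ∈ td.bag x) (hy : b ∈ td.bag y)
    (hxu : (td.G.deleteEdges {s(u, w)}).Reachable x u)
    (hyw : (td.G.deleteEdges {s(u, w)}).Reachable y w) : b ∈ td.bag u ∧ b ∈ td.bag w := by
  obtain ⟨p⟩ := (td.cover b hb).preconnected ⟨x, hx⟩ ⟨y, hy⟩
  set q := p.map (Embedding.induce {v | b ∈ td.bag v}).toHom
  have hq : ∀ v ∈ q.support, b ∈ td.bag v := by
    simp only [q, Walk.support_map, List.mem_map]
    rintro _ ⟨v, -, rfl⟩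
    exact v.2
  have he := td.acyc.mem_edges_of_reachable_deleteEdges huw hxu hyw q
  exact ⟨hq _ (q.fst_mem_support_of_mem_edges he), hq _ (q.snd_mem_support_of_mem_edges he)⟩

theorem forall_mem_bag_or_encard_preimage_le {α : Type} {H : SimpleGraph α} {f : α → B}
    (hf : Function.Injective f) (hadom : ∀ a, f a ∈ U.adom)
    (hedge : ∀ a b, H.Adj a b → ∃ v, f a ∈ td.bag v ∧ f b ∈ td.bag v)
    (hconn : ∀ E : Set α, E.encard ≤ ℓ → (H.induce Eᶜ).Preconnected) (u : td.V) :
    (∀ a, f a ∈ td.bag u) ∨ (f ⁻¹' td.bag u).encard ≤ ℓ := by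
  refine or_iff_not_imp_left.2 fun hall => ?_
  obtain ⟨x, hx⟩ := not_forall.1 hall
  obtain ⟨⟨y, hy⟩⟩ := (td.cover (f x) (hadom x)).nonempty
  obtain ⟨w, huw, hwy⟩ := td.conn.preconnected.exists_adj_reachable_deleteEdges
    (fun h : u = y => hx (h ▸ hy))
  set T := td.G.deleteEdges {s(u, w)}
  set E := f ⁻¹' (td.bag u ∩ td.bag w)
  have hE : E.encard ≤ ℓ := calc
    E.encard ≤ (td.bag u ∩ td.bag w).encard :=
      Set.encard_le_encard_of_injOn (Set.mapsTo_preimage f _) hf.injOn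
    _ = (td.bag u ∩ td.bag w).ncard := (((td.bagFin u).inter_of_left _).cast_ncard_eq).symm
    _ ≤ ℓ := by exact_mod_cast td.overlap u w huw.ne
  -- `P` holds at `x` and spreads along the edges of `H - E`, because an element outside `E`
  -- cannot have bags on both sides of `uw`.
  let P : α → Prop := fun a => ∃ v, f a ∈ td.bag v ∧ T.Reachable v w
  have hstep : ∀ a b, H.Adj a b → a ∉ E → P a → P b := by
    rintro a b hab haE ⟨v₁, hv₁, hv₁w⟩
    obtain ⟨v, hav, hbv⟩ := hedge a b hab
    refine (td.conn.preconnected.reachable_deleteEdges_or huw.ne v).elim (fun hvu => ?_)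
      fun hvw => ⟨v, hbv, hvw⟩
    exact absurd (td.mem_bag_of_reachable_deleteEdges huw (hadom a) hav hv₁ hvu hv₁w) haE
  have hP : ∀ a : ↥Eᶜ, P a := by
    intro a
    induction (reachable_iff_reflTransGen _ _).1 (hconn E hE ⟨x, fun h => hx h.1⟩ a) with
    | refl => exact ⟨y, hy, hwy.symm⟩
    | @tail b c _ hbc ih => exact hstep b c hbc b.2 ih
  refine (Set.encard_le_encard fun a hau => ?_).trans hE
  by_contra haE
  obtain ⟨v, hav, hvw⟩ := hP ⟨a, haE⟩
  exact haE (td.mem_bag_of_reachable_deleteEdges huw (hadom a) hau hav .rfl hvw)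

end TreeDecomp

theorem hasTW_natCard {C R A : Type} [Finite A] (I : Interp C R A) (ℓ : ℕ) :
    HasTW I ℓ (Nat.card A) :=
  ⟨{  V := Unit
      G := ⊥
      conn := .of_subsingleton
      acyc := SimpleGraph.isAcyclic_bot
      bag := fun _ => Set.univ
      cover := fun _ _ => @SimpleGraph.Connected.of_subsingleton _ _ ⟨⟨(), trivial⟩⟩ _
      edges := fun _ _ _ _ => ⟨(), trivial, trivial⟩
      bagFin := fun _ => Set.finite_univ
      bagCard := fun _ => (Set.ncard_univ A).le
      overlap := fun _ _ h => absurd rfl h }⟩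

section
open SimpleGraph

theorem gridDB_rn_or_of_adj {C R : Type} {m : ℕ} (r : R) (Aname : Fin m × Fin m → C)
    {p q : Fin m × Fin m} (hpq : (pathGraph m □ pathGraph m).Adj p q) :
    (gridDB m r Aname).rn r p q ∨ (gridDB m r Aname).rn r q p := by
  simp only [gridDB, boxProd_adj, pathGraph_adj, Fin.ext_iff, true_and, Nat.even_iff] at hpq ⊢
  omega

end

theorem stmt16_general {C R : Type} (m : ℕ) (hm : 2 ≤ m) (r : R)
    (Aname : Fin m × Fin m → C) :
    HasTW (gridDB m r Aname) 1 (m ^ 2) ∧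
    ∀ (B : Type), Nonempty B → ∀ U : Interp C R B, HasTW U 1 (m ^ 2 - 1) →
      (∀ d p p', p ≠ p' → U.cn (Aname p) d → ¬ U.cn (Aname p') d) →
      ¬ Nonempty (Hom (gridDB m r Aname) U) := by
  open SimpleGraph in
  refine ⟨by simpa [sq] using hasTW_natCard (gridDB m r Aname) 1, ?_⟩
  rintro B - U ⟨td⟩ hexcl ⟨h⟩
  have : Nontrivial (Fin m) := Fin.nontrivial_iff_two_le.2 hm
  have hinj : Function.Injective h.toFun := fun p p' hpp' => by
    by_contra hne
    exact hexcl _ p p' hne (h.map_cn _ p rfl) (hpp' ▸ h.map_cn _ p' rfl)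
  have hedge : ∀ p q, (pathGraph m □ pathGraph m).Adj p q →
      ∃ v, h.toFun p ∈ td.bag v ∧ h.toFun q ∈ td.bag v := fun p q hpq =>
    (gridDB_rn_or_of_adj r Aname hpq).elim (fun hr => td.edges _ _ _ (h.map_rn _ _ _ hr))
      fun hr => (td.edges _ _ _ (h.map_rn _ _ _ hr)).imp fun _ => And.symm
  have hconn (E : Set (Fin m × Fin m)) (hE : E.encard ≤ 1) :=
    Preconnected.boxProd_induce_compl (pathGraph_preconnected m) (pathGraph_preconnected m)
      (Set.encard_le_one_iff_subsingleton.1 hE)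
  obtain ⟨q, hpq⟩ := Preconnected.exists_adj_of_nontrivial
    ((pathGraph_preconnected m).boxProd (pathGraph_preconnected m)) (Classical.arbitrary _)
  obtain ⟨v, hpv, hqv⟩ := hedge _ _ hpq
  rcases td.forall_mem_bag_or_encard_preimage_le hinj (fun p => .inl ⟨_, h.map_cn _ p rfl⟩)
    hedge hconn v with hall | hle
  · have hcard := Set.ncard_le_ncard (Set.range_subset_iff.2 hall) (td.bagFin v)
    rw [Set.ncard_range_of_injective hinj, Nat.card_prod, Nat.card_fin, ← sq] at hcard
    have : 0 < m ^ 2 := by positivity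
    exact absurd (hcard.trans (td.bagCard v)) (by omega)
  · exact hpq.ne (Set.encard_le_one_iff.1 hle _ _ hpv hqv)

/-- the canonical database of the grid CQ `q_m` (for `m ≥ 2`,
with pairwise distinct concept names `A_{i,j}`) has treewidth `(1, m²)`, but
there is no homomorphism from `q_m` into any interpretation `U` of treewidth
`(1, m²-1)` in which no element satisfies two distinct concept names
`A_{i,j}`. -/
theorem stmt16 {C R : Type} (m : ℕ) (hm : 2 ≤ m) (r : R)
    (Aname : Fin m × Fin m → C) (hinj : Function.Injective Aname) :
    HasTW (gridDB m r Aname) 1 (m ^ 2) ∧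
    ∀ (B : Type), Nonempty B → ∀ U : Interp C R B, HasTW U 1 (m ^ 2 - 1) →
      (∀ d p p', p ≠ p' → U.cn (Aname p) d → ¬ U.cn (Aname p') d) →
      ¬ Nonempty (Hom (gridDB m r Aname) U) :=
  stmt16_general m hm r Aname
end
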